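/- Let M,N be positive integers, let Ω ⊆ {0,…,M−1}×{0,…,N−1} be a set of observed frequencies, and let N_ω be the cardinality of its complement Λ = Ω^c. Let N_t be a positive integer with 2·N_t·N_ω < MN. If f, f₁ : {0,…,M−1}×{0,…,N−1} → ℍ each have at most N_t nonzero values and P_Ω f = P_Ω f₁, then f = f₁. (Hence a signal with at most N_t nonzero values can be uniquely reconstructed from its bandlimited observation P_Ω f.) -/

import Mathlib

open scoped BigOperators Classical

noncomputable def qI : Quaternion ℝ := ⟨0, 1, 0, 0⟩
noncomputable def qJ : Quaternion ℝ := ⟨0, 0, 1, 0⟩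

/-- exp(θ q) = cos θ + (sin θ) q for a (unit pure) quaternion q. -/
noncomputable def qexp (q : Quaternion ℝ) (θ : ℝ) : Quaternion ℝ :=
  ((Real.cos θ : ℝ) : Quaternion ℝ) + (Real.sin θ) • q

/-- Two-sided discrete quaternion Fourier transform. -/
noncomputable def dqft (M N : ℕ) (f : Fin M → Fin N → Quaternion ℝ)
    (u : Fin M) (v : Fin N) : Quaternion ℝ :=
  ((Real.sqrt (M * N))⁻¹ : ℝ) •
    ∑ t : Fin M, ∑ s : Fin N,
      qexp qI (-(2 * Real.pi * u.val * t.val / M)) * f t s *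
        qexp qJ (-(2 * Real.pi * v.val * s.val / N))

/-- Ideal bandpass operator limiting the signal to frequencies in `Ω`. -/
noncomputable def bandpass (M N : ℕ) (Ω : Finset (Fin M × Fin N))
    (f : Fin M → Fin N → Quaternion ℝ) (t : Fin M) (s : Fin N) : Quaternion ℝ :=
  ((Real.sqrt (M * N))⁻¹ : ℝ) •
    ∑ p ∈ Ω,
      qexp qI (2 * Real.pi * p.1.val * t.val / M) * dqft M N f p.1 p.2 *
        qexp qJ (2 * Real.pi * p.2.val * s.val / N)

lemma qI_mul_qI : qI * qI = -1 := by
  ext <;> simp [Quaternion.re_mul, Quaternion.imI_mul, Quaternion.imJ_mul, Quaternion.imK_mul,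
    Quaternion.re_one, Quaternion.imI_one, Quaternion.imJ_one, Quaternion.imK_one] <;> simp [qI]

lemma qJ_mul_qJ : qJ * qJ = -1 := by
  ext <;> simp [Quaternion.re_mul, Quaternion.imI_mul, Quaternion.imJ_mul, Quaternion.imK_mul,
    Quaternion.re_one, Quaternion.imI_one, Quaternion.imJ_one, Quaternion.imK_one] <;> simp [qJ]

lemma qI_re : qI.re = 0 := rfl
lemma qJ_re : qJ.re = 0 := rfl

lemma qexp_add {q : Quaternion ℝ} (hq : q * q = -1) (a b : ℝ) :
    qexp q a * qexp q b = qexp q (a + b) := by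
  have h1 : ∀ θ : ℝ, qexp q θ = Real.cos θ • (1 : Quaternion ℝ) + Real.sin θ • q := by
    intro θ
    have : ((Real.cos θ : ℝ) : Quaternion ℝ) = Real.cos θ • (1 : Quaternion ℝ) := by
      ext <;> simp [Quaternion.re_one, Quaternion.imI_one, Quaternion.imJ_one, Quaternion.imK_one]
    rw [qexp, this]
  simp only [h1, add_mul, mul_add, smul_mul_smul, one_mul, mul_one, hq, Real.cos_add,
    Real.sin_add]
  module

lemma qexp_zero (q : Quaternion ℝ) : qexp q 0 = 1 := by
  simp [qexp]

lemma qexp_pow {q : Quaternion ℝ} (hq : q * q = -1) (θ : ℝ) (n : ℕ) :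
    qexp q θ ^ n = qexp q (n * θ) := by
  induction n with
  | zero => simp [qexp_zero]
  | succ n ih => rw [pow_succ, ih, qexp_add hq]; push_cast; ring_nf

lemma norm_of_normSq {x : Quaternion ℝ} (h : Quaternion.normSq x = 1) : ‖x‖ = 1 := by
  have h2 := Quaternion.normSq_eq_norm_mul_self x
  nlinarith [norm_nonneg x]

lemma norm_qexp_qI (θ : ℝ) : ‖qexp qI θ‖ = 1 := by
  apply norm_of_normSq
  simp [qexp, Quaternion.normSq_def', Quaternion.re_smul, Quaternion.imI_smul,
    Quaternion.imJ_smul, Quaternion.imK_smul] <;> simp [qI]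

lemma norm_qexp_qJ (θ : ℝ) : ‖qexp qJ θ‖ = 1 := by
  apply norm_of_normSq
  simp [qexp, Quaternion.normSq_def', Quaternion.re_smul, Quaternion.imI_smul,
    Quaternion.imJ_smul, Quaternion.imK_smul] <;> simp [qJ]

open Real in
lemma sum_qexp_ortho {q : Quaternion ℝ} (hq : q * q = -1) (hre : q.re = 0)
    {M : ℕ} (hM : 0 < M) (a b : Fin M) :
    ∑ x : Fin M, qexp q (2 * π * ((a : ℝ) - (b : ℝ)) * (x : ℝ) / M)
      = if a = b then (M : Quaternion ℝ) else 0 := by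
  set θ : ℝ := 2 * π * ((a : ℝ) - (b : ℝ)) / M with hθ
  have hterm : ∀ x : Fin M, qexp q (2 * π * ((a : ℝ) - (b : ℝ)) * (x : ℝ) / M)
      = qexp q θ ^ (x : ℕ) := by
    intro x
    rw [qexp_pow hq]
    congr 1
    rw [hθ]; ring
  rw [Finset.sum_congr rfl (fun x _ => hterm x)]
  rw [Fin.sum_univ_eq_sum_range (fun n => qexp q θ ^ n)]
  by_cases hab : a = b
  · subst hab
    have : θ = 0 := by rw [hθ]; ring
    simp [this, qexp_zero]
  · have hMne : (M : ℝ) ≠ 0 := Nat.cast_ne_zero.mpr hM.ne'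
    have hd : ((a : ℤ) - (b : ℤ)) ≠ 0 := by
      intro h
      exact hab (Fin.ext (by omega))
    have hpow : qexp q θ ^ M = 1 := by
      rw [qexp_pow hq]
      have harg : (M : ℝ) * θ = ((a : ℤ) - (b : ℤ) : ℤ) * (2 * π) := by
        rw [hθ]; push_cast; field_simp
      rw [harg]
      have hsin : Real.sin (((a : ℤ) - (b : ℤ) : ℤ) * (2 * π)) = 0 := by
        have : (((a : ℤ) - (b : ℤ) : ℤ) : ℝ) * (2 * π) = ((2 * ((a : ℤ) - (b : ℤ)) : ℤ) : ℝ) * π := by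
          push_cast; ring
        rw [this, Real.sin_int_mul_pi]
      rw [qexp, Real.cos_int_mul_two_pi, hsin]
      simp
    have hne1 : qexp q θ ≠ 1 := by
      intro h1
      have hcos : Real.cos θ = 1 := by
        have := congrArg QuaternionAlgebra.re h1
        simpa [qexp, hre, Quaternion.re_one] using this
      obtain ⟨n, hn⟩ := (Real.cos_eq_one_iff θ).1 hcos
      have : (n : ℝ) * M = (a : ℝ) - (b : ℝ) := by
        have h2 : (n : ℝ) * (2 * π) * M = θ * M := by rw [hn]
        rw [hθ] at h2
        field_simp at h2
        nlinarith [Real.pi_pos, h2]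
      have hnM : n * M = (a : ℤ) - (b : ℤ) := by
        exact_mod_cast this
      have hn0 : n ≠ 0 := by
        intro h0; rw [h0] at hnM; simp at hnM; omega
      have : (M : ℤ) ≤ |(a : ℤ) - (b : ℤ)| := by
        rw [← hnM, abs_mul]
        calc (M : ℤ) = 1 * M := (one_mul _).symm
        _ ≤ |n| * |(M : ℤ)| := by
            apply mul_le_mul
            · exact Int.one_le_abs (by omega)
            · simp
            · positivity
            · positivity
      have h1 : (a : ℤ) < M := by exact_mod_cast a.isLt
      have h2 : (b : ℤ) < M := by exact_mod_cast b.isLt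
      rcases abs_cases ((a : ℤ) - (b : ℤ)) with ⟨h3, _⟩ | ⟨h3, _⟩ <;> omega
    rw [geom_sum_eq hne1, hpow]
    simp [hab]

lemma sum_swap3 {α β γ G : Type*} [AddCommMonoid G] (s₁ : Finset α) (s₂ : Finset β)
    (s₃ : Finset γ) (f : α → β → γ → G) :
    ∑ a ∈ s₁, ∑ b ∈ s₂, ∑ c ∈ s₃, f a b c = ∑ c ∈ s₃, ∑ a ∈ s₁, ∑ b ∈ s₂, f a b c := by
  have h : ∀ a ∈ s₁, ∑ b ∈ s₂, ∑ c ∈ s₃, f a b c = ∑ c ∈ s₃, ∑ b ∈ s₂, f a b c :=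
    fun a _ => Finset.sum_comm
  rw [Finset.sum_congr rfl h]
  exact Finset.sum_comm

lemma middle_factor {α β : Type*} (s₁ : Finset α) (s₂ : Finset β)
    (A : α → Quaternion ℝ) (B : β → Quaternion ℝ) (c : Quaternion ℝ) :
    ∑ x ∈ s₁, ∑ y ∈ s₂, A x * c * B y = (∑ x ∈ s₁, A x) * c * (∑ y ∈ s₂, B y) := by
  simp only [Finset.sum_mul, Finset.mul_sum]
  exact Finset.sum_comm

lemma qcoe_mul_coe (m n : ℝ) (x : Quaternion ℝ) :
    ((m : ℝ) : Quaternion ℝ) * x * ((n : ℝ) : Quaternion ℝ) = (m * n) • x := by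
  rw [Quaternion.coe_mul_eq_smul, Quaternion.mul_coe_eq_smul, smul_smul, mul_comm]

open Real in
lemma rsq (M N : ℕ) (hM : 0 < M) (hN : 0 < N) :
    (Real.sqrt (M * N))⁻¹ * (Real.sqrt (M * N))⁻¹ = ((M : ℝ) * N)⁻¹ := by
  rw [← mul_inv, Real.mul_self_sqrt (by positivity)]

open Real in
lemma bandpass_univ (M N : ℕ) (hM : 0 < M) (hN : 0 < N)
    (c : Fin M → Fin N → Quaternion ℝ) (t : Fin M) (s : Fin N) :
    bandpass M N Finset.univ c t s = c t s := by
  unfold bandpass dqft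
  simp only [mul_smul_comm, smul_mul_assoc, ← Finset.smul_sum, smul_smul]
  rw [rsq M N hM hN]
  have key : ∑ p : Fin M × Fin N,
      qexp qI (2 * π * p.1.val * t.val / M) *
        (∑ t' : Fin M, ∑ s' : Fin N,
          qexp qI (-(2 * π * p.1.val * t'.val / M)) * c t' s' *
            qexp qJ (-(2 * π * p.2.val * s'.val / N))) *
        qexp qJ (2 * π * p.2.val * s.val / N)
      = ((M : ℝ) * N) • c t s := by
    have step1 : ∀ p : Fin M × Fin N,
        qexp qI (2 * π * p.1.val * t.val / M) *
          (∑ t' : Fin M, ∑ s' : Fin N,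
            qexp qI (-(2 * π * p.1.val * t'.val / M)) * c t' s' *
              qexp qJ (-(2 * π * p.2.val * s'.val / N))) *
          qexp qJ (2 * π * p.2.val * s.val / N)
        = ∑ t' : Fin M, ∑ s' : Fin N,
            (qexp qI (2 * π * p.1.val * t.val / M) *
              qexp qI (-(2 * π * p.1.val * t'.val / M))) * c t' s' *
              (qexp qJ (-(2 * π * p.2.val * s'.val / N)) *
                qexp qJ (2 * π * p.2.val * s.val / N)) := by
      intro p
      simp only [Finset.sum_mul, Finset.mul_sum, mul_assoc]
    rw [Finset.sum_congr rfl fun p _ => step1 p]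
    rw [Fintype.sum_prod_type]
    rw [sum_swap3]
    rw [Finset.sum_congr rfl fun t' _ => sum_swap3 _ _ _ _]
    have step2 : ∀ t' : Fin M, ∀ s' : Fin N,
        (∑ u : Fin M, ∑ v : Fin N,
          (qexp qI (2 * π * u.val * t.val / M) * qexp qI (-(2 * π * u.val * t'.val / M))) *
            c t' s' *
            (qexp qJ (-(2 * π * v.val * s'.val / N)) * qexp qJ (2 * π * v.val * s.val / N)))
        = (if t = t' then (M : Quaternion ℝ) else 0) * c t' s' *
            (if s = s' then (N : Quaternion ℝ) else 0) := by
      intro t' s'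
      rw [middle_factor]
      congr 1
      · congr 1
        rw [← sum_qexp_ortho qI_mul_qI qI_re hM t t']
        apply Finset.sum_congr rfl; intro u _
        rw [qexp_add qI_mul_qI]
        congr 1
        push_cast
        ring
      · rw [← sum_qexp_ortho qJ_mul_qJ qJ_re hN s s']
        apply Finset.sum_congr rfl; intro v _
        rw [qexp_add qJ_mul_qJ]
        congr 1
        push_cast
        ring
    rw [Finset.sum_congr rfl fun t' _ => Finset.sum_congr rfl fun s' _ => step2 t' s']
    simp only [ite_mul, mul_ite, zero_mul, mul_zero]
    simp only [Finset.sum_ite_eq, Finset.mem_univ, if_true]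
    rw [show ((M : Quaternion ℝ)) = (((M : ℝ)) : Quaternion ℝ) from rfl,
      show ((N : Quaternion ℝ)) = (((N : ℝ)) : Quaternion ℝ) from rfl, qcoe_mul_coe]
  rw [key, smul_smul]
  rw [inv_mul_cancel₀ (by positivity : ((M : ℝ) * N) ≠ 0), one_smul]

open Real in
lemma dqft_bandpass (M N : ℕ) (hM : 0 < M) (hN : 0 < N) (S : Finset (Fin M × Fin N))
    (c : Fin M → Fin N → Quaternion ℝ) (u₀ : Fin M) (v₀ : Fin N) :
    dqft M N (fun t s => bandpass M N S c t s) u₀ v₀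
      = if (u₀, v₀) ∈ S then dqft M N c u₀ v₀ else 0 := by
  conv_lhs => rw [dqft]
  unfold bandpass
  simp only [mul_smul_comm, smul_mul_assoc, ← Finset.smul_sum, smul_smul]
  rw [rsq M N hM hN]
  have key : (∑ t : Fin M, ∑ s : Fin N,
      qexp qI (-(2 * π * u₀.val * t.val / M)) *
        (∑ p ∈ S, qexp qI (2 * π * p.1.val * t.val / M) * dqft M N c p.1 p.2 *
            qexp qJ (2 * π * p.2.val * s.val / N)) *
        qexp qJ (-(2 * π * v₀.val * s.val / N)))
      = if (u₀, v₀) ∈ S then ((M : ℝ) * N) • dqft M N c u₀ v₀ else 0 := by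
    have step1 : ∀ (t : Fin M) (s : Fin N),
        qexp qI (-(2 * π * u₀.val * t.val / M)) *
          (∑ p ∈ S, qexp qI (2 * π * p.1.val * t.val / M) * dqft M N c p.1 p.2 *
              qexp qJ (2 * π * p.2.val * s.val / N)) *
          qexp qJ (-(2 * π * v₀.val * s.val / N))
        = ∑ p ∈ S,
            qexp qI (-(2 * π * u₀.val * t.val / M)) * qexp qI (2 * π * p.1.val * t.val / M) *
              dqft M N c p.1 p.2 *
              (qexp qJ (2 * π * p.2.val * s.val / N) * qexp qJ (-(2 * π * v₀.val * s.val / N))) := by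
      intro t s
      simp only [Finset.sum_mul, Finset.mul_sum, mul_assoc]
    rw [Finset.sum_congr rfl fun t _ => Finset.sum_congr rfl fun s _ => step1 t s]
    rw [Finset.sum_congr rfl fun t (_ : t ∈ Finset.univ) => (Finset.sum_comm :
      (∑ s : Fin N, ∑ p ∈ S, _) = _)]
    rw [Finset.sum_comm]
    have step2 : ∀ p ∈ S,
        (∑ t : Fin M, ∑ s : Fin N,
          qexp qI (-(2 * π * u₀.val * t.val / M)) * qexp qI (2 * π * p.1.val * t.val / M) *
            dqft M N c p.1 p.2 *
            (qexp qJ (2 * π * p.2.val * s.val / N) * qexp qJ (-(2 * π * v₀.val * s.val / N))))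
        = (if p.1 = u₀ then (M : Quaternion ℝ) else 0) * dqft M N c p.1 p.2 *
            (if p.2 = v₀ then (N : Quaternion ℝ) else 0) := by
      intro p _
      rw [middle_factor]
      congr 1
      · congr 1
        rw [← sum_qexp_ortho qI_mul_qI qI_re hM p.1 u₀]
        apply Finset.sum_congr rfl; intro x _
        rw [qexp_add qI_mul_qI]
        congr 1
        push_cast
        ring
      · rw [← sum_qexp_ortho qJ_mul_qJ qJ_re hN p.2 v₀]
        apply Finset.sum_congr rfl; intro x _
        rw [qexp_add qJ_mul_qJ]
        congr 1
        push_cast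
        ring
    rw [Finset.sum_congr rfl step2]
    have step3 : ∀ p ∈ S,
        (if p.1 = u₀ then (M : Quaternion ℝ) else 0) * dqft M N c p.1 p.2 *
            (if p.2 = v₀ then (N : Quaternion ℝ) else 0)
        = if p = (u₀, v₀) then ((M : ℝ) * N) • dqft M N c p.1 p.2 else 0 := by
      intro p _
      by_cases h1 : p.1 = u₀ <;> by_cases h2 : p.2 = v₀ <;>
        simp [h1, h2, Prod.ext_iff,
          show ((M : Quaternion ℝ)) = (((M : ℝ)) : Quaternion ℝ) from rfl,
          show ((N : Quaternion ℝ)) = (((N : ℝ)) : Quaternion ℝ) from rfl, qcoe_mul_coe]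
    rw [Finset.sum_congr rfl step3, Finset.sum_ite_eq' S (u₀, v₀)
      (fun p => ((M : ℝ) * N) • dqft M N c p.1 p.2)]
  rw [key]
  by_cases hmem : (u₀, v₀) ∈ S
  · simp only [hmem, if_true, smul_smul]
    rw [inv_mul_cancel₀ (by positivity : ((M : ℝ) * N) ≠ 0), one_smul]
  · simp [hmem]

lemma dqft_sub (M N : ℕ) (f f₁ : Fin M → Fin N → Quaternion ℝ) (u : Fin M) (v : Fin N) :
    dqft M N (fun t s => f t s - f₁ t s) u v = dqft M N f u v - dqft M N f₁ u v := by
  simp [dqft, mul_sub, sub_mul, Finset.sum_sub_distrib, smul_sub]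

lemma bandpass_sub (M N : ℕ) (Ω : Finset (Fin M × Fin N))
    (f f₁ : Fin M → Fin N → Quaternion ℝ) (t : Fin M) (s : Fin N) :
    bandpass M N Ω (fun t s => f t s - f₁ t s) t s
      = bandpass M N Ω f t s - bandpass M N Ω f₁ t s := by
  simp [bandpass, dqft_sub, mul_sub, sub_mul, Finset.sum_sub_distrib, smul_sub]


/-- Uniqueness of sparse recovery from bandlimited observations:
if `2·N_t·N_ω < MN` then `P_Ω f = P_Ω f₁` forces `f = f₁`. -/
theorem sparse_recovery_unique (M N : ℕ) (hM : 0 < M) (hN : 0 < N)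
    (Ω : Finset (Fin M × Fin N)) (Nω Nt : ℕ)
    (hNω : Nω = (Finset.univ \ Ω).card) (hNt : 0 < Nt)
    (hup : 2 * Nt * Nω < M * N)
    (f f₁ : Fin M → Fin N → Quaternion ℝ)
    (hf : (Finset.univ.filter (fun p : Fin M × Fin N => f p.1 p.2 ≠ 0)).card ≤ Nt)
    (hf₁ : (Finset.univ.filter (fun p : Fin M × Fin N => f₁ p.1 p.2 ≠ 0)).card ≤ Nt)
    (hobs : ∀ (t : Fin M) (s : Fin N), bandpass M N Ω f t s = bandpass M N Ω f₁ t s) :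
    f = f₁ := by
  set g : Fin M → Fin N → Quaternion ℝ := fun t s => f t s - f₁ t s with hg
  -- the bandlimited observation of g vanishes
  have hbp : ∀ t s, bandpass M N Ω g t s = 0 := by
    intro t s
    rw [hg, bandpass_sub, hobs, sub_self]
  -- hence the DQFT of g vanishes on Ω
  have hzero_hat : ∀ p ∈ Ω, dqft M N g p.1 p.2 = 0 := by
    intro p hp
    have h1 := dqft_bandpass M N hM hN Ω g p.1 p.2
    have h2 : (fun t s => bandpass M N Ω g t s) = fun _ _ => (0 : Quaternion ℝ) := by
      funext t s; exact hbp t s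
    rw [h2] at h1
    have h3 : dqft M N (fun _ _ => (0 : Quaternion ℝ)) p.1 p.2 = 0 := by
      simp [dqft]
    rw [h3] at h1
    rw [← Prod.mk.eta (p := p)] at hp
    simp only [hp, if_true] at h1
    exact h1.symm
  -- inversion restricted to Λ = univ \ Ω
  have hsplit : ∀ (t : Fin M) (s : Fin N), g t s = ((Real.sqrt (M * N))⁻¹ : ℝ) •
      ∑ p ∈ Finset.univ \ Ω,
        qexp qI (2 * Real.pi * p.1.val * t.val / M) * dqft M N g p.1 p.2 *
          qexp qJ (2 * Real.pi * p.2.val * s.val / N) := by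
    intro t s
    conv_lhs => rw [← bandpass_univ M N hM hN g t s]
    rw [bandpass]
    congr 1
    refine (Finset.sum_subset Finset.sdiff_subset fun p _ hp => ?_).symm
    have hpΩ : p ∈ Ω := by simpa using hp
    rw [hzero_hat p hpΩ, mul_zero, zero_mul]
  -- maximizers
  obtain ⟨p₀, -, hmaxA⟩ := Finset.exists_max_image (Finset.univ : Finset (Fin M × Fin N))
    (fun p => ‖g p.1 p.2‖) ⟨(⟨0, hM⟩, ⟨0, hN⟩), Finset.mem_univ _⟩
  obtain ⟨q₀, -, hmaxB⟩ := Finset.exists_max_image (Finset.univ : Finset (Fin M × Fin N))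
    (fun p => ‖dqft M N g p.1 p.2‖) ⟨(⟨0, hM⟩, ⟨0, hN⟩), Finset.mem_univ _⟩
  set A : ℝ := ‖g p₀.1 p₀.2‖ with hA
  set B : ℝ := ‖dqft M N g q₀.1 q₀.2‖ with hB
  set r : ℝ := (Real.sqrt (M * N))⁻¹ with hr
  have hr0 : 0 < r := by
    rw [hr]
    have : (0:ℝ) < Real.sqrt (M * N) := Real.sqrt_pos.mpr (by positivity)
    positivity
  set T : Finset (Fin M × Fin N) := Finset.univ.filter (fun p => g p.1 p.2 ≠ 0) with hT
  -- card T ≤ 2 Nt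
  have hTcard : T.card ≤ 2 * Nt := by
    have hsub : T ⊆ (Finset.univ.filter (fun p : Fin M × Fin N => f p.1 p.2 ≠ 0))
        ∪ (Finset.univ.filter (fun p : Fin M × Fin N => f₁ p.1 p.2 ≠ 0)) := by
      intro p hp
      simp only [hT, Finset.mem_filter, Finset.mem_univ, true_and] at hp
      simp only [Finset.mem_union, Finset.mem_filter, Finset.mem_univ, true_and]
      by_contra hc
      push_neg at hc
      apply hp
      rw [hg]
      simp [hc.1, hc.2]
    calc T.card ≤ _ := Finset.card_le_card hsub
    _ ≤ _ := Finset.card_union_le _ _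
    _ ≤ 2 * Nt := by omega
  -- bound 1 : A ≤ r * Nω * B
  have hbound1 : A ≤ r * Nω * B := by
    rw [hA, hsplit p₀.1 p₀.2, norm_smul, Real.norm_eq_abs, abs_of_pos hr0]
    have hsum : ‖∑ p ∈ Finset.univ \ Ω, qexp qI (2 * Real.pi * p.1.val * p₀.1.val / M) *
            dqft M N g p.1 p.2 * qexp qJ (2 * Real.pi * p.2.val * p₀.2.val / N)‖
        ≤ (Nω : ℝ) * B := calc
      ‖∑ p ∈ Finset.univ \ Ω, qexp qI (2 * Real.pi * p.1.val * p₀.1.val / M) *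
            dqft M N g p.1 p.2 * qexp qJ (2 * Real.pi * p.2.val * p₀.2.val / N)‖
        ≤ ∑ p ∈ Finset.univ \ Ω, ‖qexp qI (2 * Real.pi * p.1.val * p₀.1.val / M) *
            dqft M N g p.1 p.2 * qexp qJ (2 * Real.pi * p.2.val * p₀.2.val / N)‖ :=
          norm_sum_le _ _
      _ ≤ ∑ p ∈ Finset.univ \ Ω, B := by
          apply Finset.sum_le_sum
          intro p _
          rw [norm_mul, norm_mul, norm_qexp_qI, norm_qexp_qJ, one_mul, mul_one]
          exact hmaxB p (Finset.mem_univ _)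
      _ = (Nω : ℝ) * B := by
          rw [Finset.sum_const, hNω, nsmul_eq_mul]
    calc r * ‖∑ p ∈ Finset.univ \ Ω, qexp qI (2 * Real.pi * p.1.val * p₀.1.val / M) *
            dqft M N g p.1 p.2 * qexp qJ (2 * Real.pi * p.2.val * p₀.2.val / N)‖
        ≤ r * ((Nω : ℝ) * B) := mul_le_mul_of_nonneg_left hsum hr0.le
      _ = r * Nω * B := by ring
  -- bound 2 : B ≤ r * T.card * A
  have hbound2 : B ≤ r * T.card * A := by
    rw [hB, dqft, norm_smul, Real.norm_eq_abs, ← hr, abs_of_pos hr0]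
    have hsum : ‖∑ t : Fin M, ∑ s : Fin N,
            qexp qI (-(2 * Real.pi * q₀.1.val * t.val / M)) * g t s *
              qexp qJ (-(2 * Real.pi * q₀.2.val * s.val / N))‖
        ≤ (T.card : ℝ) * A := calc
      ‖∑ t : Fin M, ∑ s : Fin N,
            qexp qI (-(2 * Real.pi * q₀.1.val * t.val / M)) * g t s *
              qexp qJ (-(2 * Real.pi * q₀.2.val * s.val / N))‖
        ≤ ∑ t : Fin M, ∑ s : Fin N, ‖qexp qI (-(2 * Real.pi * q₀.1.val * t.val / M)) * g t s *
              qexp qJ (-(2 * Real.pi * q₀.2.val * s.val / N))‖ := by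
          refine (norm_sum_le _ _).trans (Finset.sum_le_sum fun t _ => norm_sum_le _ _)
      _ = ∑ t : Fin M, ∑ s : Fin N, ‖g t s‖ := by
          apply Finset.sum_congr rfl; intro t _
          apply Finset.sum_congr rfl; intro s _
          rw [norm_mul, norm_mul, norm_qexp_qI, norm_qexp_qJ, one_mul, mul_one]
      _ = ∑ p : Fin M × Fin N, ‖g p.1 p.2‖ := (Fintype.sum_prod_type' _).symm
      _ = ∑ p ∈ T, ‖g p.1 p.2‖ := by
          refine (Finset.sum_subset (Finset.subset_univ T) fun p _ hp => ?_).symm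
          simp only [hT, Finset.mem_filter, Finset.mem_univ, true_and, not_not] at hp
          simp [hp]
      _ ≤ ∑ p ∈ T, A := Finset.sum_le_sum fun p _ => hmaxA p (Finset.mem_univ _)
      _ = (T.card : ℝ) * A := by rw [Finset.sum_const, nsmul_eq_mul]
    calc r * ‖∑ t : Fin M, ∑ s : Fin N,
            qexp qI (-(2 * Real.pi * q₀.1.val * t.val / M)) * g t s *
              qexp qJ (-(2 * Real.pi * q₀.2.val * s.val / N))‖
        ≤ r * ((T.card : ℝ) * A) := mul_le_mul_of_nonneg_left hsum hr0.le
      _ = r * T.card * A := by ring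
  -- conclude A = 0
  have hA0 : 0 ≤ A := norm_nonneg _
  have hB0 : 0 ≤ B := norm_nonneg _
  have hrsq : r * r = ((M : ℝ) * N)⁻¹ := by rw [hr]; exact rsq M N hM hN
  have hMN : (0:ℝ) < (M : ℝ) * N := by positivity
  have hcount : (T.card : ℝ) * (Nω : ℝ) < (M : ℝ) * N := by
    have h1 : T.card * Nω ≤ 2 * Nt * Nω := Nat.mul_le_mul_right _ hTcard
    have h2 : T.card * Nω < M * N := lt_of_le_of_lt h1 hup
    exact_mod_cast h2
  have hAzero : A = 0 := by
    have h3 : A ≤ r * Nω * (r * T.card * A) :=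
      hbound1.trans (mul_le_mul_of_nonneg_left hbound2 (by positivity))
    have h4 : r * Nω * (r * T.card * A) = (r * r) * (T.card * Nω) * A := by ring
    rw [h4, hrsq] at h3
    have h5 : ((M:ℝ) * N)⁻¹ * ((T.card : ℝ) * Nω) < 1 := by
      rw [inv_mul_lt_iff₀ hMN, mul_one]
      exact hcount
    rcases eq_or_lt_of_le hA0 with h | h
    · exact h.symm
    · have h6 : ((M:ℝ) * N)⁻¹ * ((T.card : ℝ) * Nω) * A < 1 * A :=
        mul_lt_mul_of_pos_right h5 h
      rw [one_mul] at h6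
      linarith
  -- finish
  funext t s
  have h6 : ‖g t s‖ ≤ A := hmaxA (t, s) (Finset.mem_univ _)
  rw [hAzero] at h6
  have h7 : g t s = 0 := norm_eq_zero.mp (le_antisymm h6 (norm_nonneg _))
  rw [hg] at h7
  exact sub_eq_zero.mp h7
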